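/- arXiv:1312.1553 — 6 statements merged into one kernel-verified Lean document; each statement's English description precedes it below -/
import Mathlib

section
/- Let A be a symmetric positive definite n×n real matrix with eigenvalues λ₁ < λ₂ ≤ ... ≤ λₙ and let u be a unit vector with Rayleigh quotient θ = uᵀAu. If θ < (λ₁+λ₂)/2, then for every unit vector z orthogonal to u, zᵀ(I - uuᵀ)(A - θI)(I - uuᵀ)z ≥ λ₁ + λ₂ - 2θ > 0. -/
open Matrix

/-- lower bound for the quadratic form of the projected Jacobian
`J = (I - uuᵀ)(A - θI)(I - uuᵀ)` on the orthogonal complement of `u`. -/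
theorem stmt_0 {n : ℕ} (A : Matrix (Fin n) (Fin n) ℝ)
    (hA : A.IsSymm) (hApd : A.PosDef)
    (lam1 lam2 : ℝ) (v1 : Fin n → ℝ)
    (hv1 : v1 ⬝ᵥ v1 = 1) (hev : A.mulVec v1 = lam1 • v1)
    (hlt : lam1 < lam2)
    (hmin : ∀ z : Fin n → ℝ, z ⬝ᵥ z = 1 → lam1 ≤ z ⬝ᵥ A.mulVec z)
    (hmin2 : ∀ z : Fin n → ℝ, z ⬝ᵥ z = 1 → z ⬝ᵥ v1 = 0 → lam2 ≤ z ⬝ᵥ A.mulVec z)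
    (u : Fin n → ℝ) (hu : u ⬝ᵥ u = 1)
    (θ : ℝ) (hθ : θ = u ⬝ᵥ A.mulVec u)
    (hsmall : θ < (lam1 + lam2) / 2) :
    ∀ z : Fin n → ℝ, z ⬝ᵥ z = 1 → z ⬝ᵥ u = 0 →
      lam1 + lam2 - 2 * θ ≤
        z ⬝ᵥ ((1 - vecMulVec u u) * (A - θ • 1) * (1 - vecMulVec u u)).mulVec z
      ∧ 0 < lam1 + lam2 - 2 * θ := by
  intro z hz hzu
  have huz : u ⬝ᵥ z = 0 := by rw [dotProduct_comm]; exact hzu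
  have hnn : ∀ v : Fin n → ℝ, 0 ≤ v ⬝ᵥ v := fun v =>
    Finset.sum_nonneg fun i _ => mul_self_nonneg _
  have hsym : ∀ x y : Fin n → ℝ, x ⬝ᵥ A.mulVec y = A.mulVec x ⬝ᵥ y := by
    intro x y
    rw [Matrix.dotProduct_mulVec, ← hA.eq, Matrix.vecMul_transpose, hA.eq]
  -- key spectral bound
  have key : ∀ x : Fin n → ℝ, x ⬝ᵥ x = 1 →
      lam1 * (x ⬝ᵥ v1) ^ 2 + lam2 * (1 - (x ⬝ᵥ v1) ^ 2) ≤ x ⬝ᵥ A.mulVec x := by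
    intro x hx
    obtain ⟨c, hc⟩ : ∃ c, x ⬝ᵥ v1 = c := ⟨_, rfl⟩
    obtain ⟨w, hw⟩ : ∃ w, x - c • v1 = w := ⟨_, rfl⟩
    have hwv : w ⬝ᵥ v1 = 0 := by
      simp [← hw, sub_dotProduct, smul_dotProduct, hv1, hc]
    have hvw : v1 ⬝ᵥ w = 0 := by rw [dotProduct_comm]; exact hwv
    have hww : w ⬝ᵥ w = 1 - c ^ 2 := by
      rw [← hw]
      simp [sub_dotProduct, dotProduct_sub, smul_dotProduct, dotProduct_smul, hv1, hx,
        dotProduct_comm v1 x, hc]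
      ring
    have hxw : x = w + c • v1 := by rw [← hw, sub_add_cancel]
    have hAx : x ⬝ᵥ A.mulVec x = w ⬝ᵥ A.mulVec w + c ^ 2 * lam1 := by
      rw [hxw]
      simp only [Matrix.mulVec_add, Matrix.mulVec_smul, dotProduct_add, add_dotProduct,
        dotProduct_smul, smul_dotProduct, hev, smul_eq_mul]
      rw [hsym v1 w]
      simp [hev, smul_dotProduct, hvw, dotProduct_smul, hwv, hv1]
      ring
    have hwAw : (1 - c ^ 2) * lam2 ≤ w ⬝ᵥ A.mulVec w := by
      rcases eq_or_lt_of_le (hnn w) with h0 | hpos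
      · have hw0 : w = 0 := by rwa [eq_comm, dotProduct_self_eq_zero] at h0
        have h1 : (1:ℝ) - c ^ 2 = 0 := by rw [← hww, hw0]; simp
        rw [hw0, h1]
        simp
      · have hspos : (0:ℝ) < w ⬝ᵥ w := hpos
        obtain ⟨t, ht⟩ : ∃ t, Real.sqrt (w ⬝ᵥ w) = t := ⟨_, rfl⟩
        have htpos : 0 < t := ht ▸ Real.sqrt_pos.mpr hspos
        have ht2 : t * t = w ⬝ᵥ w := by rw [← ht]; exact Real.mul_self_sqrt hspos.le
        have h1 : (t⁻¹ • w) ⬝ᵥ (t⁻¹ • w) = 1 := by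
          simp only [smul_dotProduct, dotProduct_smul, smul_eq_mul]
          rw [← mul_assoc]
          field_simp
          linarith [ht2]
        have h2 : (t⁻¹ • w) ⬝ᵥ v1 = 0 := by simp [smul_dotProduct, hwv]
        have hm := hmin2 _ h1 h2
        have h3 : (t⁻¹ • w) ⬝ᵥ A.mulVec (t⁻¹ • w) = t⁻¹ * t⁻¹ * (w ⬝ᵥ A.mulVec w) := by
          simp only [smul_dotProduct, Matrix.mulVec_smul, dotProduct_smul, smul_eq_mul]
          ring
        rw [h3] at hm
        have hfin : (w ⬝ᵥ w) * lam2 ≤ w ⬝ᵥ A.mulVec w := by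
          have := mul_le_mul_of_nonneg_left hm (mul_pos htpos htpos).le
          calc (w ⬝ᵥ w) * lam2 = (t * t) * lam2 := by rw [ht2]
            _ ≤ (t * t) * (t⁻¹ * t⁻¹ * (w ⬝ᵥ A.mulVec w)) := this
            _ = w ⬝ᵥ A.mulVec w := by field_simp
        rwa [hww] at hfin
    rw [hc]
    linarith [hwAw, hAx]
  -- Cauchy-Schwarz: (z⬝v1)² + (u⬝v1)² ≤ 1
  have hcs : (z ⬝ᵥ v1) ^ 2 + (u ⬝ᵥ v1) ^ 2 ≤ 1 := by
    obtain ⟨a, ha⟩ : ∃ a, u ⬝ᵥ v1 = a := ⟨_, rfl⟩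
    obtain ⟨q, hq⟩ : ∃ q, v1 - a • u = q := ⟨_, rfl⟩
    have hzq : z ⬝ᵥ q = z ⬝ᵥ v1 := by
      simp [← hq, dotProduct_sub, dotProduct_smul, hzu]
    have hqq : q ⬝ᵥ q = 1 - a ^ 2 := by
      rw [← hq]
      simp [sub_dotProduct, dotProduct_sub, smul_dotProduct, dotProduct_smul, hv1, hu,
        dotProduct_comm v1 u, ha]
      ring
    have hkey := hnn ((q ⬝ᵥ q) • z - (z ⬝ᵥ q) • q)
    have hex : ((q ⬝ᵥ q) • z - (z ⬝ᵥ q) • q) ⬝ᵥ ((q ⬝ᵥ q) • z - (z ⬝ᵥ q) • q)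
        = (q ⬝ᵥ q) * ((q ⬝ᵥ q) * (z ⬝ᵥ z) - (z ⬝ᵥ q) ^ 2) := by
      simp only [sub_dotProduct, dotProduct_sub, smul_dotProduct, dotProduct_smul, smul_eq_mul,
        dotProduct_comm q z]
      ring
    rw [hex] at hkey
    rcases eq_or_lt_of_le (hnn q) with h0 | hpos
    · have hq0 : q = 0 := by rwa [eq_comm, dotProduct_self_eq_zero] at h0
      have hz0 : z ⬝ᵥ v1 = 0 := by rw [← hzq, hq0]; simp
      have ha2 : (0:ℝ) = 1 - a ^ 2 := by rw [← hqq, hq0]; simp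
      rw [hz0, ha]
      nlinarith
    · have hcs2 : (z ⬝ᵥ q) ^ 2 ≤ (q ⬝ᵥ q) * (z ⬝ᵥ z) := by nlinarith
      rw [hzq, hqq, hz] at hcs2
      rw [ha]
      linarith
  have h1 : lam1 * (u ⬝ᵥ v1) ^ 2 + lam2 * (1 - (u ⬝ᵥ v1) ^ 2) ≤ θ := hθ ▸ key u hu
  have h2 : lam1 * (z ⬝ᵥ v1) ^ 2 + lam2 * (1 - (z ⬝ᵥ v1) ^ 2) ≤ z ⬝ᵥ A.mulVec z := key z hz
  -- projector acts trivially
  have hP : ∀ w : Fin n → ℝ, (vecMulVec u u).mulVec w = (u ⬝ᵥ w) • u := by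
    intro w
    ext i
    simp only [vecMulVec, mulVec, dotProduct, of_apply, Pi.smul_apply, smul_eq_mul]
    rw [Finset.sum_mul]
    exact Finset.sum_congr rfl fun j _ => by ring
  have hPz : (1 - vecMulVec u u).mulVec z = z := by
    rw [Matrix.sub_mulVec, hP, huz, Matrix.one_mulVec]
    simp
  have hform : z ⬝ᵥ ((1 - vecMulVec u u) * (A - θ • 1) * (1 - vecMulVec u u)).mulVec z
      = z ⬝ᵥ A.mulVec z - θ := by
    rw [← Matrix.mulVec_mulVec, ← Matrix.mulVec_mulVec, hPz]
    have hQ : (A - θ • 1).mulVec z = A.mulVec z - θ • z := by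
      rw [Matrix.sub_mulVec, Matrix.smul_mulVec, Matrix.one_mulVec]
    rw [hQ]
    rw [Matrix.sub_mulVec, hP, Matrix.one_mulVec]
    simp only [dotProduct_sub, dotProduct_smul, smul_eq_mul, hzu, hz]
    ring
  have hkey2 : (0:ℝ) ≤ (1 - (z ⬝ᵥ v1) ^ 2 - (u ⬝ᵥ v1) ^ 2) * (lam2 - lam1) :=
    mul_nonneg (by linarith) (by linarith)
  refine ⟨?_, by linarith⟩
  rw [hform]
  nlinarith [h1, h2, hkey2]
end

section
/- Let J be a symmetric matrix that is positive definite on the orthogonal complement of a unit vector u, with zᵀJz ≥ μ > 0 for all unit vectors z ⟂ u, and Ju = 0. Let P̂ be symmetric positive definite and set E = I - J^{1/2} P̂ J^{1/2} (square root taken on u^⟂). Then for every nonzero w orthogonal to u, (wᵀP̂w)/(wᵀw) ≤ (1/μ)(1 + ‖E‖₂). -/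
open Matrix

/-- Spectral norm of a real matrix (operator norm of the induced map on
Euclidean space). -/
noncomputable def spec {n : ℕ} (M : Matrix (Fin n) (Fin n) ℝ) : ℝ :=
  ‖(Matrix.toEuclideanCLM (𝕜 := ℝ) M : EuclideanSpace ℝ (Fin n) →L[ℝ] EuclideanSpace ℝ (Fin n))‖

lemma dotProduct_self_nonneg' {n : ℕ} (v : Fin n → ℝ) : 0 ≤ v ⬝ᵥ v :=
  Finset.sum_nonneg fun i _ => mul_self_nonneg _

lemma spec_quad_bound {n : ℕ} (M : Matrix (Fin n) (Fin n) ℝ) (x : Fin n → ℝ) :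
    |x ⬝ᵥ M.mulVec x| ≤ spec M * (x ⬝ᵥ x) := by
  set T := (Matrix.toEuclideanCLM (𝕜 := ℝ) M :
    EuclideanSpace ℝ (Fin n) →L[ℝ] EuclideanSpace ℝ (Fin n))
  set x' : EuclideanSpace ℝ (Fin n) := (WithLp.equiv 2 (Fin n → ℝ)).symm x
  have hTx : T x' = (WithLp.equiv 2 (Fin n → ℝ)).symm (M.mulVec x) := by
    simp [T, x', WithLp.equiv_symm_apply, Matrix.toEuclideanCLM_toLp]
  have hinner : (inner ℝ x' (T x') : ℝ) = x ⬝ᵥ M.mulVec x := by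
    rw [hTx]
    simp only [PiLp.inner_apply, RCLike.inner_apply, conj_trivial]
    exact Finset.sum_congr rfl fun i _ => mul_comm _ _
  have hnorm : ‖x'‖ ^ 2 = x ⬝ᵥ x := by
    rw [← real_inner_self_eq_norm_sq]
    simp only [PiLp.inner_apply, RCLike.inner_apply, conj_trivial]
    rfl
  calc |x ⬝ᵥ M.mulVec x| = |(inner ℝ x' (T x') : ℝ)| := by rw [hinner]
    _ ≤ ‖x'‖ * ‖T x'‖ := abs_real_inner_le_norm _ _
    _ ≤ ‖x'‖ * (‖T‖ * ‖x'‖) := by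
        gcongr; exact T.le_opNorm x'
    _ = ‖T‖ * ‖x'‖ ^ 2 := by ring
    _ = spec M * (x ⬝ᵥ x) := by rw [hnorm]; rfl

/-- bound of the preconditioner norm on `u^⟂` in terms of
`E = I - J^{1/2} P̂ J^{1/2}`.  `R` denotes the PSD square root of `J`. -/
theorem stmt_4 {n : ℕ} (J P R : Matrix (Fin n) (Fin n) ℝ)
    (hJ : J.IsSymm) (u : Fin n → ℝ) (hu : u ⬝ᵥ u = 1)
    (hJu : J.mulVec u = 0)
    (μ : ℝ) (hμ : 0 < μ)
    (hJpos : ∀ z : Fin n → ℝ, z ⬝ᵥ z = 1 → z ⬝ᵥ u = 0 → μ ≤ z ⬝ᵥ J.mulVec z)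
    (hR : R.PosSemidef) (hRJ : R * R = J)
    (hP : P.PosDef) :
    ∀ w : Fin n → ℝ, w ≠ 0 → w ⬝ᵥ u = 0 →
      (w ⬝ᵥ P.mulVec w) / (w ⬝ᵥ w) ≤ (1 / μ) * (1 + spec (1 - R * P * R)) := by
  intro w hw hwu
  have hRs : Rᵀ = R := by
    have := hR.1
    rwa [Matrix.IsHermitian, Matrix.conjTranspose_eq_transpose_of_trivial] at this
  -- quadratic form of J equals norm of R applied
  have key_quad : ∀ x : Fin n → ℝ, x ⬝ᵥ J.mulVec x = (R.mulVec x) ⬝ᵥ (R.mulVec x) := by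
    intro x
    rw [← hRJ, ← Matrix.mulVec_mulVec, Matrix.dotProduct_mulVec, ← Matrix.mulVec_transpose, hRs]
  -- R u = 0
  have hRu : R.mulVec u = 0 := by
    have h0 : (R.mulVec u) ⬝ᵥ (R.mulVec u) = 0 := by
      rw [← key_quad, hJu, dotProduct_zero]
    exact (dotProduct_self_eq_zero).1 h0
  -- adjoint trick: (R x) ⬝ᵥ y = x ⬝ᵥ (R y)
  have hadj : ∀ x y : Fin n → ℝ, (R.mulVec x) ⬝ᵥ y = x ⬝ᵥ R.mulVec y := by
    intro x y
    rw [Matrix.dotProduct_mulVec, ← Matrix.mulVec_transpose, hRs, dotProduct_comm,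
      Matrix.dotProduct_mulVec, ← Matrix.mulVec_transpose, hRs, dotProduct_comm]
  -- the subspace orthogonal to u
  let K : Submodule ℝ (Fin n → ℝ) :=
    { carrier := {x | x ⬝ᵥ u = 0}
      add_mem' := by intro a b ha hb; simp only [Set.mem_setOf_eq] at *
                     rw [add_dotProduct, ha, hb, add_zero]
      zero_mem' := by simp [zero_dotProduct]
      smul_mem' := by intro c x hx; simp only [Set.mem_setOf_eq] at *
                      rw [smul_dotProduct, hx, smul_zero] }
  have memK : ∀ x : Fin n → ℝ, x ∈ K ↔ x ⬝ᵥ u = 0 := fun x => Iff.rfl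
  -- lower bound on the quadratic form on K
  have quad_lower : ∀ x : Fin n → ℝ, x ⬝ᵥ u = 0 → μ * (x ⬝ᵥ x) ≤ x ⬝ᵥ J.mulVec x := by
    intro x hx
    rcases eq_or_ne x 0 with rfl | hx0
    · simp
    · have hxx : 0 < x ⬝ᵥ x := by
        rcases lt_or_eq_of_le (dotProduct_self_nonneg' x) with h | h
        · exact h
        · exact absurd ((dotProduct_self_eq_zero).1 h.symm) hx0
      set c := Real.sqrt (x ⬝ᵥ x) with hc
      have hc0 : 0 < c := Real.sqrt_pos.2 hxx
      set z := c⁻¹ • x with hz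
      have hzz : z ⬝ᵥ z = 1 := by
        rw [hz, smul_dotProduct, dotProduct_smul, smul_smul, smul_eq_mul,
          ← mul_inv]
        rw [hc, Real.mul_self_sqrt (le_of_lt hxx)]
        exact inv_mul_cancel₀ (ne_of_gt hxx)
      have hzu : z ⬝ᵥ u = 0 := by
        rw [hz, smul_dotProduct, hx, smul_zero]
      have := hJpos z hzz hzu
      have hzJz : z ⬝ᵥ J.mulVec z = (c⁻¹ * c⁻¹) * (x ⬝ᵥ J.mulVec x) := by
        rw [hz, Matrix.mulVec_smul, smul_dotProduct, dotProduct_smul,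
          smul_smul, smul_eq_mul]
      have hcc : c⁻¹ * c⁻¹ = (x ⬝ᵥ x)⁻¹ := by
        rw [← mul_inv, hc, Real.mul_self_sqrt (le_of_lt hxx)]
      rw [hzJz, hcc] at this
      have := mul_le_mul_of_nonneg_right this (le_of_lt hxx)
      calc μ * (x ⬝ᵥ x) ≤ (x ⬝ᵥ x)⁻¹ * (x ⬝ᵥ J.mulVec x) * (x ⬝ᵥ x) := this
        _ = x ⬝ᵥ J.mulVec x := by field_simp
  -- R maps K to K
  have hmap : ∀ x ∈ K, R.mulVec x ∈ K := by
    intro x hx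
    rw [memK] at *
    rw [hadj, hRu, dotProduct_zero]
  -- restricted endomorphism
  let f : K →ₗ[ℝ] K := (R.mulVecLin).restrict (p := K) (q := K)
    (by intro x hx; simpa using hmap x hx)
  have hfinj : Function.Injective f := by
    rw [← LinearMap.ker_eq_bot, Submodule.eq_bot_iff]
    intro ⟨x, hx⟩ hfx
    have hRx : R.mulVec x = 0 := by
      have : (f ⟨x, hx⟩ : Fin n → ℝ) = 0 := by rw [hfx]; rfl
      simpa [f, LinearMap.restrict_apply] using this
    have h0 : x ⬝ᵥ J.mulVec x = 0 := by rw [key_quad, hRx, dotProduct_zero]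
    have := quad_lower x hx
    rw [h0] at this
    have hxx0 : x ⬝ᵥ x ≤ 0 := nonpos_of_mul_nonpos_right this hμ
    have : x ⬝ᵥ x = 0 := le_antisymm hxx0 (dotProduct_self_nonneg' x)
    have : x = 0 := (dotProduct_self_eq_zero).1 this
    simpa [this]
  have hfsurj : Function.Surjective f :=
    (LinearMap.injective_iff_surjective).1 hfinj
  -- get preimage of w
  obtain ⟨⟨x, hxK⟩, hfx⟩ := hfsurj ⟨w, hwu⟩
  have hRx : R.mulVec x = w := by
    have : (f ⟨x, hxK⟩ : Fin n → ℝ) = w := by rw [hfx]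
    simpa [f, LinearMap.restrict_apply] using this
  have hww : 0 < w ⬝ᵥ w := by
    rcases lt_or_eq_of_le (dotProduct_self_nonneg' w) with h | h
    · exact h
    · exact absurd ((dotProduct_self_eq_zero).1 h.symm) hw
  -- μ (x⬝x) ≤ w⬝w
  have hxw : μ * (x ⬝ᵥ x) ≤ w ⬝ᵥ w := by
    have := quad_lower x hxK
    rw [key_quad, hRx] at this
    exact this
  -- w ⬝ P w = x ⬝ (R P R) x
  have hwPw : w ⬝ᵥ P.mulVec w = x ⬝ᵥ (R * P * R).mulVec x := by
    rw [← hRx, hadj]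
    rw [← Matrix.mulVec_mulVec, ← Matrix.mulVec_mulVec]
  set E := (1 : Matrix (Fin n) (Fin n) ℝ) - R * P * R with hE
  have hEx : x ⬝ᵥ (R * P * R).mulVec x = x ⬝ᵥ x - x ⬝ᵥ E.mulVec x := by
    rw [hE, Matrix.sub_mulVec, dotProduct_sub, Matrix.one_mulVec]
    ring
  have hEbound := spec_quad_bound E x
  have hspec0 : 0 ≤ spec E := norm_nonneg _
  have step1 : w ⬝ᵥ P.mulVec w ≤ (1 + spec E) * (x ⬝ᵥ x) := by
    rw [hwPw, hEx]
    have : -(x ⬝ᵥ E.mulVec x) ≤ spec E * (x ⬝ᵥ x) := (abs_le.1 hEbound).1 |> neg_le.1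
    nlinarith [dotProduct_self_nonneg' x]
  have step2 : (x ⬝ᵥ x) ≤ (1 / μ) * (w ⬝ᵥ w) := by
    rw [div_mul_eq_mul_div, one_mul, le_div_iff₀ hμ, mul_comm]
    exact hxw
  rw [div_le_iff₀ hww]
  calc w ⬝ᵥ P.mulVec w ≤ (1 + spec E) * (x ⬝ᵥ x) := step1
    _ ≤ (1 + spec E) * ((1 / μ) * (w ⬝ᵥ w)) := by
        have h1 : 0 ≤ 1 + spec E := by linarith
        exact mul_le_mul_of_nonneg_left step2 h1
    _ = (1 / μ) * (1 + spec E) * (w ⬝ᵥ w) := by ring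
end

section
/- Let v and u be unit vectors in ℝⁿ, s a vector orthogonal to u, e = u - v, e' = (u+s)/√(1+‖s‖²) - v, and β = √(1+‖s‖²). If ‖e'‖ ≤ ‖e‖ and ‖e‖ < 2/15, then ‖s‖ ≤ 3‖e‖. -/
lemma stmt_5_aux (t ε β a b : ℝ) (ht0 : 0 ≤ t) (hε0 : 0 ≤ ε)
    (hβ1 : 1 ≤ β) (hβsq : β ^ 2 = 1 + t ^ 2) (hβle : β ≤ 1 + t)
    (hk1 : (β - 1) * a ≤ b) (hk2 : b ≤ t * ε)
    (haval : a = 1 - ε ^ 2 / 2) (hsmall : ε < 2 / 15) : t ≤ 3 * ε := by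
  have hapos : 0 < a := by nlinarith
  have hβ2 : t ^ 2 ≤ (β - 1) * (2 + t) := by nlinarith
  have hmain : t ^ 2 * a ≤ t * ε * (2 + t) := by nlinarith
  by_contra hcon
  push_neg at hcon
  have htpos : 0 < t := lt_of_le_of_lt (by positivity) hcon
  have h2 : t * (t * (1 - ε - ε ^ 2 / 2)) ≤ t * (2 * ε) := by nlinarith
  have h3 : t * (1 - ε - ε ^ 2 / 2) ≤ 2 * ε := (mul_le_mul_iff_right₀ htpos).mp h2
  nlinarith [mul_nonneg hε0 hε0, mul_nonneg (mul_nonneg hε0 hε0) hε0]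

/-- bound of the Newton step norm in terms of the error norm. -/
theorem stmt_5 {n : ℕ} (u v s : EuclideanSpace ℝ (Fin n))
    (hu : ‖u‖ = 1) (hv : ‖v‖ = 1) (hsu : inner ℝ s u = (0 : ℝ))
    (β : ℝ) (hβ : β = Real.sqrt (1 + ‖s‖ ^ 2))
    (e e' : EuclideanSpace ℝ (Fin n))
    (he : e = u - v) (he' : e' = β⁻¹ • (u + s) - v)
    (hdec : ‖e'‖ ≤ ‖e‖) (hsmall : ‖e‖ < 2 / 15) :
    ‖s‖ ≤ 3 * ‖e‖ := by
  set t := ‖s‖ with ht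
  set ε := ‖e‖ with hε
  have ht0 : 0 ≤ t := norm_nonneg s
  have hε0 : 0 ≤ ε := norm_nonneg e
  have hus : (inner ℝ u s : ℝ) = 0 := by rw [real_inner_comm]; exact hsu
  set a : ℝ := inner ℝ u v with ha
  set b : ℝ := inner ℝ s v with hb
  -- ε² = 2 - 2a
  have hε2 : ε ^ 2 = 2 - 2 * a := by
    have := @norm_sub_sq_real (EuclideanSpace ℝ (Fin n)) _ _ u v
    rw [hε, he, this, hu, hv]; ring
  -- β basics
  have h1t : (0:ℝ) ≤ 1 + t ^ 2 := by positivity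
  have hβsq : β ^ 2 = 1 + t ^ 2 := by rw [hβ]; exact Real.sq_sqrt h1t
  have hβ1 : 1 ≤ β := by
    rw [hβ]
    have : (1:ℝ) = Real.sqrt 1 := (Real.sqrt_one).symm
    rw [this]
    exact Real.sqrt_le_sqrt (by nlinarith)
  have hβpos : 0 < β := lt_of_lt_of_le one_pos hβ1
  have hβle : β ≤ 1 + t := by nlinarith [sq_nonneg (β - (1 + t))]
  -- ‖u+s‖ = β
  have hus2 : ‖u + s‖ ^ 2 = 1 + t ^ 2 := by
    have := @norm_add_sq_real (EuclideanSpace ℝ (Fin n)) _ _ u s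
    rw [this, hu, hus]; ring
  have husβ : ‖u + s‖ = β := by
    have h1 : ‖u + s‖ ^ 2 = β ^ 2 := by rw [hus2, hβsq]
    nlinarith [norm_nonneg (u + s)]
  -- ‖e'‖² = 2 - 2β⁻¹(a+b)
  have he'2 : ‖e'‖ ^ 2 = 2 - 2 * β⁻¹ * (a + b) := by
    have h := @norm_sub_sq_real (EuclideanSpace ℝ (Fin n)) _ _ (β⁻¹ • (u + s)) v
    have hn : ‖β⁻¹ • (u + s)‖ = 1 := by
      rw [norm_smul, husβ, norm_inv, Real.norm_eq_abs, abs_of_pos hβpos]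
      field_simp
    have hi : (inner ℝ (β⁻¹ • (u + s)) v : ℝ) = β⁻¹ * (a + b) := by
      rw [real_inner_smul_left, inner_add_left]
    rw [he', h, hn, hv, hi]; ring
  -- from hdec: b ≥ (β-1) a
  have hkey1 : (β - 1) * a ≤ b := by
    have hsq : ‖e'‖ ^ 2 ≤ ε ^ 2 := pow_le_pow_left₀ (norm_nonneg e') hdec 2
    rw [he'2, hε2] at hsq
    have : a ≤ β⁻¹ * (a + b) := by linarith
    have h2 : β * a ≤ a + b := by
      have := mul_le_mul_of_nonneg_left this (le_of_lt hβpos)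
      rw [← mul_assoc, mul_inv_cancel₀ (ne_of_gt hβpos), one_mul] at this
      linarith
    linarith
  -- b ≤ t ε
  have hkey2 : b ≤ t * ε := by
    have h1 : b = -(inner ℝ s e : ℝ) := by
      rw [hb, he, inner_sub_right, hsu]; ring
    have h2 : |(inner ℝ s e : ℝ)| ≤ t * ε := abs_real_inner_le_norm s e
    have := neg_abs_le (inner ℝ s e : ℝ)
    linarith [abs_le.mp h2]
  have haval : a = 1 - ε ^ 2 / 2 := by linarith
  exact stmt_5_aux t ε β a b ht0 hε0 hβ1 hβsq hβle hkey1 hkey2 haval hsmall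
end

section
/- Let A be symmetric positive definite with simple smallest eigenvalue λ₁, eigenvector v₁ (unit norm). There exist constants c₁ > 0 and δ > 0 such that if u_k, u_{k+1} are unit vectors with errors e_k = u_k - v₁, e_{k+1} = u_{k+1} - v₁ satisfying ‖e_{k+1}‖ ≤ ‖e_k‖ < δ and u_{k+1} = (u_k + s)/‖u_k + s‖ with s ⟂ u_k, then ‖J_{k+1} - J_k‖₂ ≤ c₁‖e_k‖, where J_i = (I - u_i u_iᵀ)(A - θ_i I)(I - u_i u_iᵀ) and θ_i = u_iᵀ A u_i. -/
open Matrix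

noncomputable def iota {n : ℕ} (x : Fin n → ℝ) : EuclideanSpace ℝ (Fin n) :=
  (WithLp.equiv 2 (Fin n → ℝ)).symm x

lemma norm_iota {n : ℕ} (x : Fin n → ℝ) : ‖iota x‖ = Real.sqrt (x ⬝ᵥ x) := by
  rw [EuclideanSpace.norm_eq]
  congr 1
  simp [iota, dotProduct, WithLp.equiv_symm_apply, Real.norm_eq_abs, sq_abs, sq]

lemma inner_iota {n : ℕ} (x y : Fin n → ℝ) : (inner ℝ (iota x) (iota y) : ℝ) = x ⬝ᵥ y := by
  simp [iota, PiLp.inner_apply, WithLp.equiv_symm_apply, dotProduct, RCLike.inner_apply, mul_comm]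

lemma iota_sub {n : ℕ} (x y : Fin n → ℝ) : iota (x - y) = iota x - iota y := by
  simp [iota, WithLp.equiv_symm_apply]

lemma spec_nonneg {n : ℕ} (M : Matrix (Fin n) (Fin n) ℝ) : 0 ≤ spec M := norm_nonneg _

lemma spec_apply_le {n : ℕ} (M : Matrix (Fin n) (Fin n) ℝ) (x : Fin n → ℝ) :
    ‖iota (M *ᵥ x)‖ ≤ spec M * ‖iota x‖ := by
  rw [show iota (M *ᵥ x) = Matrix.toEuclideanCLM (𝕜 := ℝ) M (iota x) from
    (Matrix.toEuclideanCLM_toLp M x).symm]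
  exact (Matrix.toEuclideanCLM (𝕜 := ℝ) M).le_opNorm _

lemma spec_mul_le {n : ℕ} (M N : Matrix (Fin n) (Fin n) ℝ) :
    spec (M * N) ≤ spec M * spec N := by
  unfold spec
  rw [_root_.map_mul]
  exact ContinuousLinearMap.opNorm_comp_le _ _

lemma spec_sub_le {n : ℕ} (M N : Matrix (Fin n) (Fin n) ℝ) :
    spec (M - N) ≤ spec M + spec N := by
  unfold spec; rw [map_sub]; exact norm_sub_le _ _

lemma spec_add_le {n : ℕ} (M N : Matrix (Fin n) (Fin n) ℝ) :
    spec (M + N) ≤ spec M + spec N := by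
  unfold spec; rw [map_add]; exact norm_add_le _ _

lemma spec_one_le {n : ℕ} : spec (1 : Matrix (Fin n) (Fin n) ℝ) ≤ 1 := by
  unfold spec; rw [_root_.map_one]; exact ContinuousLinearMap.norm_id_le

lemma spec_le_bound {n : ℕ} (M : Matrix (Fin n) (Fin n) ℝ) (C : ℝ) (hC : 0 ≤ C)
    (h : ∀ y : Fin n → ℝ, ‖iota (M *ᵥ y)‖ ≤ C * ‖iota y‖) : spec M ≤ C := by
  apply ContinuousLinearMap.opNorm_le_bound _ hC
  intro x
  have hx : x = iota ((WithLp.equiv 2 (Fin n → ℝ)) x) := (Equiv.symm_apply_apply _ _).symm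
  rw [hx, show Matrix.toEuclideanCLM (𝕜 := ℝ) M (iota ((WithLp.equiv 2 (Fin n → ℝ)) x))
      = iota (M *ᵥ ((WithLp.equiv 2 (Fin n → ℝ)) x)) from
    Matrix.toEuclideanCLM_toLp M _]
  exact h _

lemma iota_smul {n : ℕ} (c : ℝ) (x : Fin n → ℝ) : iota (c • x) = c • iota x := rfl

lemma spec_smul_one_le {n : ℕ} (t : ℝ) :
    spec (t • (1 : Matrix (Fin n) (Fin n) ℝ)) ≤ |t| := by
  apply spec_le_bound _ _ (abs_nonneg t)
  intro y
  have : (t • (1 : Matrix (Fin n) (Fin n) ℝ)) *ᵥ y = t • y := by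
    simp [smul_mulVec]
  rw [this, iota_smul, norm_smul, Real.norm_eq_abs]

lemma spec_vecMulVec_le {n : ℕ} (u w : Fin n → ℝ) :
    spec (vecMulVec u w) ≤ ‖iota u‖ * ‖iota w‖ := by
  apply spec_le_bound _ _ (mul_nonneg (norm_nonneg _) (norm_nonneg _))
  intro y
  have h1 : (vecMulVec u w) *ᵥ y = (w ⬝ᵥ y) • u := by
    ext i
    simp only [vecMulVec_apply, mulVec, dotProduct, Pi.smul_apply, smul_eq_mul,
      Finset.sum_mul, Finset.mul_sum]
    exact Finset.sum_congr rfl fun j _ => by ring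
  rw [h1, iota_smul, norm_smul, Real.norm_eq_abs]
  have h2 : |w ⬝ᵥ y| ≤ ‖iota w‖ * ‖iota y‖ := by
    rw [← inner_iota]
    exact abs_real_inner_le_norm _ _
  calc |w ⬝ᵥ y| * ‖iota u‖ ≤ (‖iota w‖ * ‖iota y‖) * ‖iota u‖ :=
        mul_le_mul_of_nonneg_right h2 (norm_nonneg _)
    _ = ‖iota u‖ * ‖iota w‖ * ‖iota y‖ := by ring

lemma dot_mulVec_le {n : ℕ} (M : Matrix (Fin n) (Fin n) ℝ) (x y : Fin n → ℝ) :
    |x ⬝ᵥ M *ᵥ y| ≤ spec M * ‖iota x‖ * ‖iota y‖ := by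
  rw [← inner_iota]
  calc |(inner ℝ (iota x) (iota (M *ᵥ y)) : ℝ)| ≤ ‖iota x‖ * ‖iota (M *ᵥ y)‖ :=
        abs_real_inner_le_norm _ _
    _ ≤ ‖iota x‖ * (spec M * ‖iota y‖) :=
        mul_le_mul_of_nonneg_left (spec_apply_le M y) (norm_nonneg _)
    _ = spec M * ‖iota x‖ * ‖iota y‖ := by ring

lemma mul3_le {x y z X Y Z : ℝ} (hx : x ≤ X) (hy : y ≤ Y) (hz : z ≤ Z)
    (hx0 : 0 ≤ x) (hy0 : 0 ≤ y) (hz0 : 0 ≤ z) (hX0 : 0 ≤ X) (hY0 : 0 ≤ Y) :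
    x * y * z ≤ X * Y * Z :=
  mul_le_mul (mul_le_mul hx hy hy0 hX0) hz hz0 (mul_nonneg hX0 hY0)

lemma spec_mul3_le {n : ℕ} {M N K : Matrix (Fin n) (Fin n) ℝ} {X Y Z : ℝ}
    (hM : spec M ≤ X) (hN : spec N ≤ Y) (hK : spec K ≤ Z) :
    spec (M * N * K) ≤ X * Y * Z := by
  calc spec (M * N * K) ≤ spec (M * N) * spec K := spec_mul_le _ _
    _ ≤ (spec M * spec N) * spec K :=
        mul_le_mul_of_nonneg_right (spec_mul_le _ _) (spec_nonneg _)
    _ ≤ X * Y * Z :=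
        mul3_le hM hN hK (spec_nonneg _) (spec_nonneg _) (spec_nonneg _)
          ((spec_nonneg M).trans hM) ((spec_nonneg N).trans hN)

/-- Lipschitz-type bound `‖J_{k+1} - J_k‖₂ ≤ c₁ ‖e_k‖` for the
projected Jacobians along a Newton step with orthogonal correction `s`. -/
theorem stmt_11 {n : ℕ} (A : Matrix (Fin n) (Fin n) ℝ)
    (hA : A.IsSymm) (hApd : A.PosDef)
    (lam1 : ℝ) (v1 : Fin n → ℝ)
    (hv1 : v1 ⬝ᵥ v1 = 1) (hev : A.mulVec v1 = lam1 • v1)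
    (hmin : ∀ z : Fin n → ℝ, z ⬝ᵥ z = 1 → lam1 ≤ z ⬝ᵥ A.mulVec z)
    (hsimple : ∀ z : Fin n → ℝ, A.mulVec z = lam1 • z → ∃ c : ℝ, z = c • v1) :
    ∃ c1 > (0 : ℝ), ∃ δ > (0 : ℝ),
      ∀ uk uk1 s : Fin n → ℝ,
        uk ⬝ᵥ uk = 1 → uk1 ⬝ᵥ uk1 = 1 → s ⬝ᵥ uk = 0 →
        uk1 = (Real.sqrt ((uk + s) ⬝ᵥ (uk + s)))⁻¹ • (uk + s) →
        Real.sqrt ((uk1 - v1) ⬝ᵥ (uk1 - v1)) ≤ Real.sqrt ((uk - v1) ⬝ᵥ (uk - v1)) →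
        Real.sqrt ((uk - v1) ⬝ᵥ (uk - v1)) < δ →
        spec ((1 - vecMulVec uk1 uk1) * (A - (uk1 ⬝ᵥ A.mulVec uk1) • 1) * (1 - vecMulVec uk1 uk1)
              - (1 - vecMulVec uk uk) * (A - (uk ⬝ᵥ A.mulVec uk) • 1) * (1 - vecMulVec uk uk))
          ≤ c1 * Real.sqrt ((uk - v1) ⬝ᵥ (uk - v1)) := by
  have ha0 : 0 ≤ spec A := spec_nonneg A
  refine ⟨48 * spec A + 1, by linarith, 1, one_pos, ?_⟩
  intro uk uk1 s huk huk1 _ _ hle _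
  set a := spec A with ha
  set ek := Real.sqrt ((uk - v1) ⬝ᵥ (uk - v1)) with hek
  have hek0 : 0 ≤ ek := Real.sqrt_nonneg _
  -- unit norms
  have hnu : ‖iota uk‖ = 1 := by rw [norm_iota, huk, Real.sqrt_one]
  have hnu1 : ‖iota uk1‖ = 1 := by rw [norm_iota, huk1, Real.sqrt_one]
  -- distance between iterates
  set d := ‖iota (uk1 - uk)‖ with hd
  have hd0 : 0 ≤ d := norm_nonneg _
  have hd2 : d ≤ 2 * ek := by
    have h1 : iota (uk1 - uk) = iota (uk1 - v1) - iota (uk - v1) := by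
      rw [← iota_sub]; congr 1; abel
    have h2 : d ≤ ‖iota (uk1 - v1)‖ + ‖iota (uk - v1)‖ := by
      rw [hd, h1]; exact norm_sub_le _ _
    rw [norm_iota, norm_iota] at h2
    linarith [hle]
  set t1 := uk ⬝ᵥ A.mulVec uk with ht1
  set t2 := uk1 ⬝ᵥ A.mulVec uk1 with ht2
  set P1 : Matrix (Fin n) (Fin n) ℝ := 1 - vecMulVec uk uk with hP1def
  set P2 : Matrix (Fin n) (Fin n) ℝ := 1 - vecMulVec uk1 uk1 with hP2def
  set B1 : Matrix (Fin n) (Fin n) ℝ := A - t1 • 1 with hB1def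
  set B2 : Matrix (Fin n) (Fin n) ℝ := A - t2 • 1 with hB2def
  -- simple bounds
  have hP1 : spec P1 ≤ 2 := by
    have := spec_sub_le (1 : Matrix (Fin n) (Fin n) ℝ) (vecMulVec uk uk)
    have h2 := spec_vecMulVec_le uk uk
    rw [hnu] at h2
    have h3 : spec (1 : Matrix (Fin n) (Fin n) ℝ) ≤ 1 := spec_one_le
    simp only [mul_one] at h2
    linarith
  have hP2 : spec P2 ≤ 2 := by
    have := spec_sub_le (1 : Matrix (Fin n) (Fin n) ℝ) (vecMulVec uk1 uk1)
    have h2 := spec_vecMulVec_le uk1 uk1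
    rw [hnu1] at h2
    have h3 : spec (1 : Matrix (Fin n) (Fin n) ℝ) ≤ 1 := spec_one_le
    simp only [mul_one] at h2
    linarith
  have habs1 : |t1| ≤ a := by
    have := dot_mulVec_le A uk uk
    rw [hnu] at this; simpa using this
  have habs2 : |t2| ≤ a := by
    have := dot_mulVec_le A uk1 uk1
    rw [hnu1] at this; simpa using this
  have hB1 : spec B1 ≤ 2 * a := by
    have h1 := spec_sub_le A (t1 • (1 : Matrix (Fin n) (Fin n) ℝ))
    have h2 := spec_smul_one_le (n := n) t1
    have h3 := abs_nonneg t1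
    linarith [neg_abs_le t1, le_abs_self t1]
  have hB2 : spec B2 ≤ 2 * a := by
    have h1 := spec_sub_le A (t2 • (1 : Matrix (Fin n) (Fin n) ℝ))
    have h2 := spec_smul_one_le (n := n) t2
    linarith [neg_abs_le t2, le_abs_self t2]
  -- difference of projectors
  have hPdiff : spec (P2 - P1) ≤ 2 * d := by
    have heq : P2 - P1 = vecMulVec uk (uk - uk1) + vecMulVec (uk - uk1) uk1 := by
      ext i j
      simp [hP1def, hP2def, vecMulVec_apply, Matrix.sub_apply, Matrix.add_apply,
        Pi.sub_apply]
      ring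
    have hrev : ‖iota (uk - uk1)‖ = d := by
      show ‖iota (uk - uk1)‖ = ‖iota (uk1 - uk)‖
      rw [iota_sub, iota_sub]
      exact norm_sub_rev _ _
    rw [heq]
    have h1 := spec_add_le (vecMulVec uk (uk - uk1)) (vecMulVec (uk - uk1) uk1)
    have h2 := spec_vecMulVec_le uk (uk - uk1)
    have h3 := spec_vecMulVec_le (uk - uk1) uk1
    rw [hrev] at h2 h3
    rw [hnu] at h2
    rw [hnu1] at h3
    simp only [one_mul, mul_one] at h2 h3
    linarith
  -- difference of shifted matrices
  have hBdiff : spec (B2 - B1) ≤ 2 * a * d := by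
    have heq : B2 - B1 = (t1 - t2) • (1 : Matrix (Fin n) (Fin n) ℝ) := by
      rw [hB1def, hB2def]
      module
    have habsd : |t1 - t2| ≤ 2 * a * d := by
      have hsplit : t1 - t2 = uk ⬝ᵥ A *ᵥ (uk - uk1) + (uk - uk1) ⬝ᵥ A *ᵥ uk1 := by
        rw [ht1, ht2, Matrix.mulVec_sub, dotProduct_sub, sub_dotProduct]
        ring
      have h1 := dot_mulVec_le A uk (uk - uk1)
      have h2 := dot_mulVec_le A (uk - uk1) uk1
      have hrev : ‖iota (uk - uk1)‖ = d := by
        show ‖iota (uk - uk1)‖ = ‖iota (uk1 - uk)‖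
        rw [iota_sub, iota_sub]
        exact norm_sub_rev _ _
      rw [hnu, hrev] at h1
      rw [hrev, hnu1] at h2
      calc |t1 - t2| ≤ |uk ⬝ᵥ A *ᵥ (uk - uk1)| + |(uk - uk1) ⬝ᵥ A *ᵥ uk1| := by
            rw [hsplit]; exact abs_add_le _ _
        _ ≤ a * 1 * d + a * d * 1 := add_le_add h1 h2
        _ = 2 * a * d := by ring
    rw [heq]
    exact (spec_smul_one_le _).trans habsd
  -- key algebraic identity
  have hId : P2 * B2 * P2 - P1 * B1 * P1
      = (P2 - P1) * B2 * P2 + P1 * (B2 - B1) * P2 + P1 * B1 * (P2 - P1) := by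
    noncomm_ring
  have hbound : spec (P2 * B2 * P2 - P1 * B1 * P1) ≤ 24 * a * d := by
    rw [hId]
    have m1 : spec ((P2 - P1) * B2 * P2) ≤ (2 * d) * (2 * a) * 2 :=
      spec_mul3_le hPdiff hB2 hP2
    have m2 : spec (P1 * (B2 - B1) * P2) ≤ 2 * (2 * a * d) * 2 :=
      spec_mul3_le hP1 hBdiff hP2
    have m3 : spec (P1 * B1 * (P2 - P1)) ≤ 2 * (2 * a) * (2 * d) :=
      spec_mul3_le hP1 hB1 hPdiff
    calc spec ((P2 - P1) * B2 * P2 + P1 * (B2 - B1) * P2 + P1 * B1 * (P2 - P1))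
        ≤ spec ((P2 - P1) * B2 * P2 + P1 * (B2 - B1) * P2) + spec (P1 * B1 * (P2 - P1)) :=
          spec_add_le _ _
      _ ≤ (spec ((P2 - P1) * B2 * P2) + spec (P1 * (B2 - B1) * P2))
            + spec (P1 * B1 * (P2 - P1)) :=
          add_le_add_left (spec_add_le _ _) _
      _ ≤ 24 * a * d := by linarith
  calc spec (P2 * B2 * P2 - P1 * B1 * P1) ≤ 24 * a * d := hbound
    _ ≤ 24 * a * (2 * ek) := by nlinarith
    _ ≤ (48 * a + 1) * ek := by nlinarith
end

section
/- Let S be a symmetric matrix with eigenpair (η, x), ‖x‖ = 1, and suppose S² + J^{1/2}S + S J^{1/2} = Δ for symmetric matrices J^{1/2} ⪰ 0 and Δ. Then η² + 2(xᵀJ^{1/2}x)η - xᵀΔx = 0, and hence |η| ≤ |xᵀJ^{1/2}x| + √((xᵀJ^{1/2}x)² + |xᵀΔx|). -/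
open Matrix

/-- scalar quadratic equation satisfied by an eigenvalue `η` of
`S` when `S² + J^{1/2}S + SJ^{1/2} = Δ`, and the resulting bound on `|η|`. -/
theorem stmt_13 {n : ℕ} (S R Δ : Matrix (Fin n) (Fin n) ℝ)
    (hS : S.IsSymm) (hR : R.PosSemidef) (hΔ : Δ.IsSymm)
    (η : ℝ) (x : Fin n → ℝ) (hx : x ⬝ᵥ x = 1) (hev : S.mulVec x = η • x)
    (hid : S * S + R * S + S * R = Δ) :
    η ^ 2 + 2 * (x ⬝ᵥ R.mulVec x) * η - x ⬝ᵥ Δ.mulVec x = 0 ∧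
      |η| ≤ |x ⬝ᵥ R.mulVec x| +
        Real.sqrt ((x ⬝ᵥ R.mulVec x) ^ 2 + |x ⬝ᵥ Δ.mulVec x|) := by
  set a := x ⬝ᵥ R.mulVec x with ha
  set b := x ⬝ᵥ Δ.mulVec x with hb
  have hvm : x ᵥ* S = η • x := by
    have h0 : x ᵥ* S = Sᵀ *ᵥ x := (Matrix.mulVec_transpose S x).symm
    rw [hS.eq] at h0
    rw [h0, hev]
  have key : η ^ 2 + 2 * a * η - b = 0 := by
    have h := congrArg (fun M => x ⬝ᵥ M.mulVec x) hid
    simp only [Matrix.add_mulVec, dotProduct_add, ← Matrix.mulVec_mulVec] at h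
    rw [hev] at h
    have h1 : x ⬝ᵥ S.mulVec (η • x) = η ^ 2 := by
      rw [Matrix.mulVec_smul, hev, dotProduct_smul, dotProduct_smul, hx]
      simp [smul_eq_mul]; ring
    have h2 : x ⬝ᵥ R.mulVec (η • x) = η * a := by
      rw [Matrix.mulVec_smul, dotProduct_smul, smul_eq_mul]
    have h3 : x ⬝ᵥ S.mulVec (R.mulVec x) = η * a := by
      rw [Matrix.dotProduct_mulVec, hvm, smul_dotProduct, smul_eq_mul]
    rw [h1, h2, h3] at h
    rw [← hb] at h
    linarith
  refine ⟨key, ?_⟩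
  have hsq : (η + a) ^ 2 = a ^ 2 + b := by ring_nf; nlinarith [key]
  have h1 : |η| ≤ |a| + |η + a| := by
    have h0 := abs_add_le (η + a) (-a)
    simp only [add_neg_cancel_right, abs_neg] at h0
    linarith
  have h2 : |η + a| ≤ Real.sqrt (a ^ 2 + |b|) := by
    rw [← Real.sqrt_sq_eq_abs]
    apply Real.sqrt_le_sqrt
    rw [hsq]
    linarith [le_abs_self b]
  linarith
end

section
/- Let u, u' be unit vectors, J a symmetric matrix that is positive definite on u^⟂ with Ju = 0, s ⟂ u with s ≠ 0, and P̂ symmetric positive definite. Define the BFGS update P̂' = (ssᵀ)/(sᵀJs) + (I - (ssᵀJ)/(sᵀJs)) P̂ (I - (Jssᵀ)/(sᵀJs)). Setting w = J^{1/2}s/‖J^{1/2}s‖ and W = I - wwᵀ, one has I - J^{1/2} P̂' J^{1/2} = W (I - J^{1/2} P̂ J^{1/2}) W. -/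
open Matrix

private lemma mul_vvm {n : ℕ} (A : Matrix (Fin n) (Fin n) ℝ) (x y : Fin n → ℝ) :
    A * vecMulVec x y = vecMulVec (A.mulVec x) y := by
  ext i j
  simp [vecMulVec_apply, Matrix.mul_apply, Matrix.mulVec, dotProduct,
    Finset.sum_mul, mul_assoc]

private lemma vvm_mul {n : ℕ} (A : Matrix (Fin n) (Fin n) ℝ) (x y : Fin n → ℝ) :
    vecMulVec x y * A = vecMulVec x (A.vecMul y) := by
  ext i j
  simp [vecMulVec_apply, Matrix.mul_apply, Matrix.vecMul, dotProduct,
    Finset.mul_sum, mul_assoc]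

private lemma vvm_mul_vvm {n : ℕ} (x y z v : Fin n → ℝ) :
    vecMulVec x y * vecMulVec z v = (y ⬝ᵥ z) • vecMulVec x v := by
  ext i j
  simp only [Matrix.mul_apply, vecMulVec_apply, Matrix.smul_apply, smul_eq_mul,
    dotProduct, Finset.sum_mul, Finset.mul_sum]
  exact Finset.sum_congr rfl fun k _ => by ring

private lemma vvm_smul_smul {n : ℕ} (c : ℝ) (x : Fin n → ℝ) :
    vecMulVec (c • x) (c • x) = (c * c) • vecMulVec x x := by
  ext i j
  simp [vecMulVec_apply]
  ring

/-- key algebraic identity in the bounded-deterioration proof: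
`I - J^{1/2} P̂' J^{1/2} = W (I - J^{1/2} P̂ J^{1/2}) W` where `P̂'` is the BFGS
update of `P̂` with the pair `(s, Js)`, `w = J^{1/2}s/‖J^{1/2}s‖` and
`W = I - wwᵀ`.  `R` denotes the PSD square root of `J`. -/
theorem stmt_14 {n : ℕ} (J P R : Matrix (Fin n) (Fin n) ℝ)
    (hJ : J.IsSymm)
    (u u' : Fin n → ℝ) (hu : u ⬝ᵥ u = 1) (hu' : u' ⬝ᵥ u' = 1)
    (hJu : J.mulVec u = 0)
    (hJpos : ∀ z : Fin n → ℝ, z ≠ 0 → z ⬝ᵥ u = 0 → 0 < z ⬝ᵥ J.mulVec z)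
    (s : Fin n → ℝ) (hs : s ≠ 0) (hsu : s ⬝ᵥ u = 0)
    (hR : R.PosSemidef) (hRJ : R * R = J)
    (hP : P.PosDef)
    (P' : Matrix (Fin n) (Fin n) ℝ)
    (hP' : P' = ((s ⬝ᵥ J.mulVec s)⁻¹ • vecMulVec s s) +
      (1 - (s ⬝ᵥ J.mulVec s)⁻¹ • (vecMulVec s s * J)) * P *
      (1 - (s ⬝ᵥ J.mulVec s)⁻¹ • (J * vecMulVec s s)))
    (w : Fin n → ℝ)
    (hw : w = (Real.sqrt (R.mulVec s ⬝ᵥ R.mulVec s))⁻¹ • R.mulVec s)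
    (W : Matrix (Fin n) (Fin n) ℝ) (hW : W = 1 - vecMulVec w w) :
    1 - R * P' * R = W * (1 - R * P * R) * W := by
  have hRsymm : Rᵀ = R := by
    have := hR.1
    simpa [Matrix.IsHermitian] using this
  set t : Fin n → ℝ := R.mulVec s with htdef
  -- α = sᵀ J s = t ⬝ᵥ t
  have hα : s ⬝ᵥ J.mulVec s = t ⬝ᵥ t := by
    rw [← hRJ, ← Matrix.mulVec_mulVec, Matrix.dotProduct_mulVec, ← Matrix.mulVec_transpose,
      hRsymm]
  have hspos : 0 < s ⬝ᵥ J.mulVec s := hJpos s hs hsu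
  have htt : 0 < t ⬝ᵥ t := hα ▸ hspos
  have httne : t ⬝ᵥ t ≠ 0 := ne_of_gt htt
  -- w w ᵀ = (tᵀt)⁻¹ • t tᵀ
  have hww : vecMulVec w w = (t ⬝ᵥ t)⁻¹ • vecMulVec t t := by
    rw [hw, vvm_smul_smul]
    congr 1
    rw [← mul_inv]
    rw [Real.mul_self_sqrt (le_of_lt htt)]
  have hWt : W = 1 - (t ⬝ᵥ t)⁻¹ • vecMulVec t t := by rw [hW, hww]
  -- key products
  have hJvm : J.vecMul s = R.mulVec t := by
    rw [← Matrix.mulVec_transpose, hJ.eq, ← hRJ, Matrix.mulVec_mulVec]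
  have hJmv : J.mulVec s = R.mulVec t := by
    rw [← hRJ, ← Matrix.mulVec_mulVec]
  have hRA : R * (1 - (s ⬝ᵥ J.mulVec s)⁻¹ • (vecMulVec s s * J)) = W * R := by
    rw [hWt, hα, Matrix.mul_sub, Matrix.sub_mul, Matrix.mul_one, Matrix.one_mul,
      Matrix.mul_smul, Matrix.smul_mul]
    congr 2
    rw [← Matrix.mul_assoc, mul_vvm, vvm_mul, vvm_mul, hJvm, ← Matrix.mulVec_transpose, hRsymm]
  have hBR : (1 - (s ⬝ᵥ J.mulVec s)⁻¹ • (J * vecMulVec s s)) * R = R * W := by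
    rw [hWt, hα, Matrix.sub_mul, Matrix.mul_sub, Matrix.mul_one, Matrix.one_mul,
      Matrix.smul_mul, Matrix.mul_smul]
    congr 2
    rw [Matrix.mul_assoc, vvm_mul, mul_vvm, mul_vvm, hJmv, ← Matrix.mulVec_transpose, hRsymm]
  have hT1 : R * ((s ⬝ᵥ J.mulVec s)⁻¹ • vecMulVec s s) * R = vecMulVec w w := by
    rw [hα, hww, Matrix.mul_smul, Matrix.smul_mul]
    congr 1
    rw [mul_vvm, vvm_mul, ← Matrix.mulVec_transpose, hRsymm]
  have hWW : W * W = W := by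
    have hwdot : w ⬝ᵥ w = 1 := by
      rw [hw]
      simp only [smul_dotProduct, dotProduct_smul, smul_eq_mul]
      rw [← mul_assoc, ← mul_inv, Real.mul_self_sqrt (le_of_lt htt)]
      exact inv_mul_cancel₀ httne
    rw [hW, Matrix.sub_mul, Matrix.mul_sub, Matrix.mul_sub, Matrix.mul_one,
      Matrix.one_mul, vvm_mul_vvm, hwdot, one_smul]
    simp only [Matrix.mul_one]
    abel
  have h1 : R * P' * R = vecMulVec w w + W * (R * P * R) * W := by
    rw [hP', Matrix.mul_add, Matrix.add_mul, hT1]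
    congr 1
    calc R * ((1 - (s ⬝ᵥ J.mulVec s)⁻¹ • (vecMulVec s s * J)) * P *
          (1 - (s ⬝ᵥ J.mulVec s)⁻¹ • (J * vecMulVec s s))) * R
        = (R * (1 - (s ⬝ᵥ J.mulVec s)⁻¹ • (vecMulVec s s * J))) * P *
          ((1 - (s ⬝ᵥ J.mulVec s)⁻¹ • (J * vecMulVec s s)) * R) := by
          simp only [Matrix.mul_assoc]
      _ = (W * R) * P * (R * W) := by rw [hRA, hBR]
      _ = W * (R * P * R) * W := by simp only [Matrix.mul_assoc]
  rw [h1]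
  have h2 : W * (1 - R * P * R) * W = W * W - W * (R * P * R) * W := by
    rw [Matrix.mul_sub, Matrix.sub_mul, Matrix.mul_one]
  rw [h2, hWW, hW]
  abel
end
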